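/- arXiv:2508.10127 — 2 statements merged into one kernel-verified Lean document; each statement's English description precedes it below -/
import Mathlib

section
/- For finite abelian groups G, H, K, the number of subgroups N of G with N isomorphic to K and G/N isomorphic to H equals the number of subgroups N of G with N isomorphic to H and G/N isomorphic to K. -/
namespace HallAux

open CharacterModule

variable {A B G : Type*} [AddCommGroup A] [AddCommGroup B] [AddCommGroup G]

/-- Functoriality of the character module under `AddEquiv`. -/
def dCongr (e : A ≃+ B) : CharacterModule A ≃+ CharacterModule B where
  toFun c := c.comp e.symm.toAddMonoidHom
  invFun c := c.comp e.toAddMonoidHom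
  left_inv c := AddMonoidHom.ext fun x => congrArg c (e.symm_apply_apply x)
  right_inv c := AddMonoidHom.ext fun x => congrArg c (e.apply_symm_apply x)
  map_add' _ _ := rfl

section zmod

variable (n : ℕ)

/-- The basic character of `ZMod n`, sending `1` to `1/n`. -/
noncomputable def phi : ZMod n →+ AddCircle (1 : ℚ) :=
  ZMod.lift n ⟨zmultiplesHom _ (((n : ℚ)⁻¹ : ℚ) : AddCircle (1 : ℚ)), by
    rcases Nat.eq_zero_or_pos n with h | h
    · simp [h]
    · simp only [zmultiplesHom_apply, ← AddCircle.coe_zsmul, zsmul_eq_mul]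
      push_cast
      rw [mul_inv_cancel₀ (by exact_mod_cast h.ne')]
      exact AddCircle.coe_period 1⟩

lemma phi_intCast (k : ℤ) : phi n ((k : ZMod n)) = (k : ℤ) • (((n : ℚ)⁻¹ : ℚ) : AddCircle (1 : ℚ)) :=
  ZMod.lift_coe _ _ _

lemma phi_injective (hn : 0 < n) : Function.Injective (phi n) := by
  have hord : addOrderOf ((((n : ℚ)⁻¹ : ℚ)) : AddCircle (1 : ℚ)) = n := by
    have := AddCircle.addOrderOf_div_of_gcd_eq_one (p := (1 : ℚ)) (m := 1) hn (Nat.gcd_one_left n)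
    simpa [one_div] using this
  rw [injective_iff_map_eq_zero]
  intro a ha
  obtain ⟨k, rfl⟩ := ZMod.intCast_surjective a
  rw [phi_intCast] at ha
  rw [ZMod.intCast_zmod_eq_zero_iff_dvd]
  exact_mod_cast hord ▸ addOrderOf_dvd_iff_zsmul_eq_zero.mpr ha

end zmod

end HallAux

namespace Part2
open HallAux
variable (n : ℕ)

/-- Evaluation of a character of `ZMod n` at `1`. -/
def ev : CharacterModule (ZMod n) →+ AddCircle (1 : ℚ) where
  toFun c := c 1
  map_zero' := rfl
  map_add' _ _ := rfl

lemma ev_injective : Function.Injective (ev n) := by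
  intro c d h
  ext x
  obtain ⟨k, rfl⟩ := ZMod.intCast_surjective x
  have : ((k : ZMod n)) = k • (1 : ZMod n) := by rw [zsmul_one]
  rw [this, map_zsmul, map_zsmul]
  exact congrArg (k • ·) h

lemma torsion_mem_range (hn : 0 < n) (x : AddCircle (1 : ℚ)) (hx : (n : ℤ) • x = 0) :
    x ∈ (phi n).range := by
  induction x using QuotientAddGroup.induction_on with
  | H q =>
  rw [show (QuotientAddGroup.mk q : AddCircle (1:ℚ)) = (q : AddCircle (1:ℚ)) from rfl] at hx ⊢
  rw [← AddCircle.coe_zsmul, AddCircle.coe_eq_zero_iff] at hx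
  obtain ⟨m, hm⟩ := hx
  have h := hn
  · refine ⟨(m : ZMod n), ?_⟩
    rw [phi_intCast]
    rw [← AddCircle.coe_zsmul]
    congr 1
    have hn : (n : ℚ) ≠ 0 := by exact_mod_cast h.ne'
    rw [zsmul_eq_mul, zsmul_eq_mul, mul_one] at hm
    push_cast at hm
    rw [zsmul_eq_mul]
    field_simp
    linarith [hm]

lemma range_ev_eq (hn : 0 < n) : (ev n).range = (phi n).range := by
  apply le_antisymm
  · rintro x ⟨c, rfl⟩
    apply torsion_mem_range n hn
    show (n : ℤ) • c 1 = 0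
    rw [← map_zsmul, zsmul_one, Int.cast_natCast, ZMod.natCast_self, map_zero]
  · rintro x ⟨k, rfl⟩
    refine ⟨(phi n).comp (AddMonoidHom.mulLeft k), ?_⟩
    show (phi n) (k * 1) = phi n k
    rw [mul_one]

noncomputable def zmodDual (hn : 0 < n) : CharacterModule (ZMod n) ≃+ ZMod n :=
  ((AddMonoidHom.ofInjective (ev_injective n)).trans
    (AddEquiv.addSubgroupCongr (range_ev_eq n hn))).trans
    (AddMonoidHom.ofInjective (phi_injective n hn)).symm

end Part2

namespace Part3
open HallAux Part2
open scoped DirectSum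

lemma selfDual (A : Type*) [AddCommGroup A] [Finite A] :
    Nonempty (CharacterModule A ≃+ A) := by
  classical
  obtain ⟨ι, _, n, hn, ⟨e⟩⟩ := AddCommGroup.equiv_directSum_zmod_of_finite' A
  have e2 : (⨁ i, ZMod (n i)) ≃+ ((i : ι) → ZMod (n i)) :=
    (DirectSum.linearEquivFunOnFintype ℤ ι (fun i => ZMod (n i))).toAddEquiv
  have e3 : CharacterModule ((i : ι) → ZMod (n i)) ≃+ ((i : ι) → CharacterModule (ZMod (n i))) :=
    Pi.addMonoidHomAddEquiv (fun i => ZMod (n i)) (AddCircle (1 : ℚ))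
  have e4 : ((i : ι) → CharacterModule (ZMod (n i))) ≃+ ((i : ι) → ZMod (n i)) :=
    AddEquiv.piCongrRight fun i => zmodDual (n i) (Nat.lt_of_lt_of_le Nat.zero_lt_one (hn i).le)
  exact ⟨(((dCongr e).trans (dCongr e2)).trans e3).trans <| e4.trans (e.trans e2).symm⟩

end Part3

namespace Part4
open HallAux

variable {G : Type*} [AddCommGroup G]

/-- The annihilator of a subgroup inside the character module. -/
def ann (N : AddSubgroup G) : AddSubgroup (CharacterModule G) where
  carrier := {c | ∀ x ∈ N, c x = 0}
  add_mem' := by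
    intro c d hc hd x hx
    show c x + d x = 0
    rw [hc x hx, hd x hx, add_zero]
  zero_mem' := fun x _ => rfl
  neg_mem' := by
    intro c hc x hx
    show -(c x) = 0
    rw [hc x hx, neg_zero]

lemma mem_ann {N : AddSubgroup G} {c : CharacterModule G} :
    c ∈ ann N ↔ ∀ x ∈ N, c x = 0 := Iff.rfl

/-- The dual of the quotient `G ⧸ N` is the annihilator of `N`. -/
noncomputable def dualQuot (N : AddSubgroup G) : CharacterModule (G ⧸ N) ≃+ ann N := by
  refine AddEquiv.ofBijective
    ({ toFun := fun c => ⟨c.comp (QuotientAddGroup.mk' N), fun x hx => by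
        show c _ = 0
        rw [show ((QuotientAddGroup.mk' N) x) = 0 from (QuotientAddGroup.eq_zero_iff x).mpr hx,
          map_zero]⟩
       map_zero' := rfl
       map_add' := fun _ _ => rfl } :
      CharacterModule (G ⧸ N) →+ ann N) ⟨?_, ?_⟩
  · intro c d h
    have h' : c.comp (QuotientAddGroup.mk' N) = d.comp (QuotientAddGroup.mk' N) :=
      congrArg Subtype.val h
    ext x
    induction x using QuotientAddGroup.induction_on with
    | H g => exact DFunLike.congr_fun h' g
  · rintro ⟨c, hc⟩
    refine ⟨QuotientAddGroup.lift N c hc, ?_⟩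
    apply Subtype.ext
    ext g
    rfl

/-- The dual of `N` is the quotient of the dual of `G` by the annihilator of `N`. -/
noncomputable def dualSub (N : AddSubgroup G) :
    (CharacterModule G ⧸ ann N) ≃+ CharacterModule N := by
  let res : CharacterModule G →+ CharacterModule N :=
    { toFun := fun c => c.comp N.subtype
      map_zero' := rfl
      map_add' := fun _ _ => rfl }
  have hsur : Function.Surjective res := by
    intro c
    obtain ⟨d, hd⟩ := CharacterModule.dual_surjective_of_injective
      (N.subtype.toIntLinearMap) N.subtype_injective c
    exact ⟨d, hd⟩
  have hker : res.ker = ann N := by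
    ext c
    constructor
    · intro hc x hx
      have : (c.comp N.subtype) = 0 := hc
      exact DFunLike.congr_fun this ⟨x, hx⟩
    · intro hc
      show c.comp N.subtype = 0
      ext x
      exact hc x.1 x.2
  exact (QuotientAddGroup.quotientAddEquivOfEq hker.symm).trans
    (QuotientAddGroup.quotientKerEquivOfSurjective res hsur)

lemma mem_iff_forall_ann {N : AddSubgroup G} {g : G} :
    g ∈ N ↔ ∀ c ∈ ann N, c g = 0 := by
  constructor
  · exact fun hg c hc => hc g hg
  · intro h
    by_contra hg
    have hne : ((QuotientAddGroup.mk' N) g) ≠ 0 := fun h0 =>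
      hg ((QuotientAddGroup.eq_zero_iff g).mp h0)
    obtain ⟨c, hc⟩ := CharacterModule.exists_character_apply_ne_zero_of_ne_zero hne
    refine hc (h (c.comp (QuotientAddGroup.mk' N)) (fun x hx => ?_))
    show c _ = 0
    rw [show ((QuotientAddGroup.mk' N) x) = 0 from (QuotientAddGroup.eq_zero_iff x).mpr hx,
      map_zero]

lemma ann_injective : Function.Injective (ann : AddSubgroup G → AddSubgroup (CharacterModule G)) := by
  intro N M h
  ext g
  rw [mem_iff_forall_ann, mem_iff_forall_ann, h]

end Part4

namespace Part5
open HallAux Part3 Part4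

instance fin_addSubgroup (G : Type*) [AddCommGroup G] [Finite G] : Finite (AddSubgroup G) :=
  Finite.of_injective (fun N => (N : Set G)) SetLike.coe_injective

theorem key_le (G H K : Type*) [AddCommGroup G] [AddCommGroup H] [AddCommGroup K]
    [Finite G] [Finite H] [Finite K] :
    Nat.card {N : AddSubgroup G // Nonempty (N ≃+ K) ∧ Nonempty (G ⧸ N ≃+ H)} ≤
      Nat.card {N : AddSubgroup G // Nonempty (N ≃+ H) ∧ Nonempty (G ⧸ N ≃+ K)} := by
  obtain ⟨eG⟩ := selfDual G
  obtain ⟨eH⟩ := selfDual H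
  obtain ⟨eK⟩ := selfDual K
  have hGfin : Finite (CharacterModule G) := Finite.of_equiv G eG.symm.toEquiv
  refine Nat.card_le_card_of_injective
    (fun x => ⟨(ann x.1).map eG.toAddMonoidHom,
      ⟨(((AddSubgroup.equivMapOfInjective (ann x.1) eG.toAddMonoidHom eG.injective).symm.trans
          ((dualQuot x.1).symm.trans (dCongr x.2.2.some))).trans eH : _ ≃+ H)⟩,
      ⟨((QuotientAddGroup.congr (ann x.1) _ eG rfl).symm.trans
          ((dualSub x.1).trans ((dCongr x.2.1.some).trans eK)) : _ ≃+ K)⟩⟩) ?_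
  intro a b hab
  apply Subtype.ext
  apply ann_injective
  exact AddSubgroup.map_injective eG.injective (congrArg Subtype.val hab)

end Part5

namespace Part6
open HallAux Part5

variable {G : Type*} [CommGroup G]

def g1 (N : Subgroup G) : ↥(Subgroup.toAddSubgroup N) ≃+ Additive ↥N where
  toFun x := Additive.ofMul (⟨Additive.toMul x.1, x.2⟩ : N)
  invFun y := ⟨Additive.ofMul ((Additive.toMul y : N) : G), (Additive.toMul y).2⟩
  left_inv _ := rfl
  right_inv _ := rfl
  map_add' _ _ := rfl

def g2 (N : Subgroup G) : (Additive G ⧸ Subgroup.toAddSubgroup N) ≃+ Additive (G ⧸ N) :=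
  { (Quotient.congr (Additive.toMul : Additive G ≃ G) (fun a b => by
      rw [QuotientAddGroup.leftRel_apply, QuotientGroup.leftRel_apply]
      exact Iff.rfl)).trans (Additive.ofMul : (G ⧸ N) ≃ Additive (G ⧸ N)) with
    map_add' := by
      rintro ⟨a⟩ ⟨b⟩
      rfl }

def setEquiv (K H : Type*) [CommGroup K] [CommGroup H] :
    {N : Subgroup G // Nonempty (N ≃* K) ∧ Nonempty (G ⧸ N ≃* H)} ≃
      {N' : AddSubgroup (Additive G) //
        Nonempty (N' ≃+ Additive K) ∧ Nonempty (Additive G ⧸ N' ≃+ Additive H)} :=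
  (Subgroup.toAddSubgroup (G := G)).toEquiv.subtypeEquiv fun N => by
    constructor
    · rintro ⟨⟨e1⟩, ⟨e2⟩⟩
      exact ⟨⟨(g1 N).trans (MulEquiv.toAdditive e1)⟩, ⟨(g2 N).trans (MulEquiv.toAdditive e2)⟩⟩
    · rintro ⟨⟨e1⟩, ⟨e2⟩⟩
      exact ⟨⟨MulEquiv.toAdditive.symm ((g1 N).symm.trans e1)⟩,
        ⟨MulEquiv.toAdditive.symm ((g2 N).symm.trans e2)⟩⟩

end Part6

theorem hall_subgroup_symmetry' (G H K : Type*) [CommGroup G] [CommGroup H] [CommGroup K]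
    [Finite G] [Finite H] [Finite K] :
    Nat.card {N : Subgroup G // Nonempty (N ≃* K) ∧ Nonempty (G ⧸ N ≃* H)} =
      Nat.card {N : Subgroup G // Nonempty (N ≃* H) ∧ Nonempty (G ⧸ N ≃* K)} := by
  rw [Nat.card_congr (Part6.setEquiv K H), Nat.card_congr (Part6.setEquiv H K)]
  exact le_antisymm (Part5.key_le (Additive G) (Additive H) (Additive K))
    (Part5.key_le (Additive G) (Additive K) (Additive H))


/-- Hall symmetry: for finite abelian groups `G, H, K`, the number of subgroups `N ≤ G`
with `N ≅ K` and `G/N ≅ H` equals the number of subgroups `N ≤ G` with `N ≅ H` and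
`G/N ≅ K`. -/
theorem hall_subgroup_symmetry (G H K : Type*) [CommGroup G] [CommGroup H] [CommGroup K]
    [Finite G] [Finite H] [Finite K] :
    Nat.card {N : Subgroup G // Nonempty (N ≃* K) ∧ Nonempty (G ⧸ N ≃* H)} =
      Nat.card {N : Subgroup G // Nonempty (N ≃* H) ∧ Nonempty (G ⧸ N ≃* K)} := by
  exact hall_subgroup_symmetry' G H K
end

section
/- Let p be a prime and λ a partition, and let G_λ = ⊕ᵢ ℤ/p^{λᵢ}ℤ. Then the cardinality of the exterior square ∧²G_λ (the quotient of G_λ ⊗ G_λ by the subgroup generated by all g ⊗ g) equals p^{Σ_{i≥1} λ'ᵢ(λ'ᵢ−1)/2}, where λ' is the conjugate partition. -/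
/-!
If `n j ∣ n i` whenever `i < j`, the exterior square of `G = ∏ᵢ ℤ/nᵢ` is `∏_{i<j} ℤ/nⱼ`: it is
generated by the classes of `eᵢ ⊗ eⱼ` with `i < j`, each killed by `nⱼ`, and the alternating map
whose `(i, j)` coordinate is the minor `gᵢhⱼ - hᵢgⱼ` (with `gᵢ, hᵢ` reduced mod `nⱼ`) sends them to
the standard generators. For `nᵢ = p^λᵢ` this gives `|∧²G| = p^(Σ_{i<j} λⱼ)`. Counting the pairs
`i < j` with `k ≤ λⱼ` level by level turns the exponent into `Σₖ λ'ₖ(λ'ₖ - 1)/2`, because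
`{j | k ≤ λⱼ}` is the initial segment of length `λ'ₖ`.
-/

open Finset TensorProduct

theorem ZMod.addMonoidHom_ext {n : ℕ} {A : Type*} [AddGroup A] {f g : ZMod n →+ A}
    (h : f 1 = g 1) : f = g := by
  ext x
  obtain ⟨k, rfl⟩ := ZMod.intCast_surjective x
  rw [← zsmul_one, map_zsmul, map_zsmul, h]

theorem ZMod.intLinearMap_ext {n : ℕ} {A : Type*} [AddCommGroup A] {f g : ZMod n →ₗ[ℤ] A}
    (h : f 1 = g 1) : f = g :=
  LinearMap.toAddMonoidHom_injective (ZMod.addMonoidHom_ext h)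

abbrev LtPair (ι : Type*) [LT ι] : Type _ := {q : ι × ι // q.1 < q.2}

abbrev ExteriorSquare (M : Type*) [AddCommGroup M] : Type _ :=
  (M ⊗[ℤ] M) ⧸ AddSubgroup.closure {z : M ⊗[ℤ] M | ∃ g : M, z = g ⊗ₜ[ℤ] g}

namespace ExteriorSquare

variable {M A : Type*} [AddCommGroup M] [AddCommGroup A]

def mk : M ⊗[ℤ] M →+ ExteriorSquare M := QuotientAddGroup.mk' _

@[simp]
theorem mk_tmul_self (g : M) : mk (g ⊗ₜ[ℤ] g) = 0 :=
  (QuotientAddGroup.eq_zero_iff _).mpr (AddSubgroup.subset_closure ⟨g, rfl⟩)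

theorem mk_tmul_comm (g h : M) : mk (h ⊗ₜ[ℤ] g) = -mk (g ⊗ₜ[ℤ] h) := by
  have := mk_tmul_self (g + h)
  simp only [add_tmul, tmul_add, map_add, mk_tmul_self] at this
  rw [eq_neg_iff_add_eq_zero]
  simpa using this

def lift (B : M →ₗ[ℤ] M →ₗ[ℤ] A) (hB : B.IsAlt) : ExteriorSquare M →+ A :=
  QuotientAddGroup.lift _ (TensorProduct.lift B).toAddMonoidHom <|
    (AddSubgroup.closure_le _).mpr <| by
      rintro _ ⟨g, rfl⟩
      simpa using hB g

@[simp]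
theorem lift_mk_tmul (B : M →ₗ[ℤ] M →ₗ[ℤ] A) (hB : B.IsAlt) (g h : M) :
    lift B hB (mk (g ⊗ₜ[ℤ] h)) = B g h :=
  TensorProduct.lift.tmul g h

theorem hom_ext_pi_zmod {ι : Type*} [Finite ι] [DecidableEq ι] {n : ι → ℕ}
    {f f' : ExteriorSquare (∀ i, ZMod (n i)) →+ A}
    (H : ∀ i j, f (mk (Pi.single i 1 ⊗ₜ[ℤ] Pi.single j 1)) =
      f' (mk (Pi.single i 1 ⊗ₜ[ℤ] Pi.single j 1))) :
    f = f' := by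
  refine QuotientAddGroup.addMonoidHom_ext _ (AddMonoidHom.toIntLinearMap_injective ?_)
  refine TensorProduct.ext (LinearMap.pi_ext' fun i => ZMod.intLinearMap_ext ?_)
  exact LinearMap.pi_ext' fun j => ZMod.intLinearMap_ext (H i j)

end ExteriorSquare

section PiZMod

variable {ι : Type*} [LinearOrder ι] (n : ι → ℕ) (hn : ∀ i j : ι, i < j → n j ∣ n i)

def wedgeCoords :
    (∀ i, ZMod (n i)) →ₗ[ℤ] (∀ i, ZMod (n i)) →ₗ[ℤ] ∀ q : LtPair ι, ZMod (n q.1.2) :=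
  LinearMap.mk₂ ℤ
    (fun g h q =>
      ZMod.castHom (hn _ _ q.2) _ (g q.1.1) * h q.1.2 -
        ZMod.castHom (hn _ _ q.2) _ (h q.1.1) * g q.1.2)
    (by intros; funext; simp only [Pi.add_apply, map_add]; ring)
    (by intros; funext; simp only [Pi.smul_apply, map_zsmul, smul_sub, smul_mul_assoc,
      mul_smul_comm])
    (by intros; funext; simp only [Pi.add_apply, map_add]; ring)
    (by intros; funext; simp only [Pi.smul_apply, map_zsmul, smul_sub, smul_mul_assoc,
      mul_smul_comm])

theorem wedgeCoords_isAlt : (wedgeCoords n hn).IsAlt := by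
  intro g
  funext q
  simp [wedgeCoords, mul_comm]

theorem wedgeCoords_single_single {i j : ι} (hij : i < j) :
    wedgeCoords n hn (Pi.single i 1) (Pi.single j 1) = Pi.single ⟨(i, j), hij⟩ 1 := by
  funext ⟨⟨a, b⟩, hab⟩
  simp only [wedgeCoords, LinearMap.mk₂_apply]
  by_cases hq : (⟨(a, b), hab⟩ : LtPair ι) = ⟨(i, j), hij⟩
  · obtain ⟨rfl, rfl⟩ : a = i ∧ b = j := by simpa using hq
    simp [hab.ne', hij.ne, ZMod.cast_one (hn a b hab)]
  rw [Pi.single_eq_of_ne hq]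
  have h₁ : ZMod.castHom (hn a b hab) (ZMod (n b)) ((Pi.single i 1 : ∀ k, ZMod (n k)) a) *
        (Pi.single j 1 : ∀ k, ZMod (n k)) b = 0 := by
    by_cases hai : a = i
    · subst hai
      simp [Pi.single_eq_of_ne (show b ≠ j by simpa using hq)]
    · simp [Pi.single_eq_of_ne hai]
  have h₂ : ZMod.castHom (hn a b hab) (ZMod (n b)) ((Pi.single j 1 : ∀ k, ZMod (n k)) a) *
        (Pi.single i 1 : ∀ k, ZMod (n k)) b = 0 := by
    by_cases haj : a = j
    · subst haj
      simp [Pi.single_eq_of_ne (hab.trans' hij).ne']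
    · simp [Pi.single_eq_of_ne haj]
  rw [h₁, h₂, sub_zero]

def wedgeToPi : ExteriorSquare (∀ i, ZMod (n i)) →+ ∀ q : LtPair ι, ZMod (n q.1.2) :=
  ExteriorSquare.lift (wedgeCoords n hn) (wedgeCoords_isAlt n hn)

theorem wedgeToPi_mk_single {i j : ι} (hij : i < j) :
    wedgeToPi n hn (ExteriorSquare.mk (Pi.single i 1 ⊗ₜ[ℤ] Pi.single j 1)) =
      Pi.single ⟨(i, j), hij⟩ 1 := by
  rw [wedgeToPi, ExteriorSquare.lift_mk_tmul, wedgeCoords_single_single n hn hij]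

variable {n}

def wedgeOfPiSingle (q : LtPair ι) : ZMod (n q.1.2) →+ ExteriorSquare (∀ i, ZMod (n i)) :=
  ZMod.lift _ ⟨zmultiplesHom _ (ExteriorSquare.mk (Pi.single q.1.1 1 ⊗ₜ[ℤ] Pi.single q.1.2 1)), by
    rw [zmultiplesHom_apply, ← map_zsmul, ← tmul_smul, ← Pi.single_smul, zsmul_one,
      Int.cast_natCast, ZMod.natCast_self, Pi.single_zero, tmul_zero, map_zero]⟩

theorem wedgeOfPiSingle_one (q : LtPair ι) :
    wedgeOfPiSingle q (1 : ZMod (n q.1.2)) =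
      ExteriorSquare.mk (Pi.single q.1.1 1 ⊗ₜ[ℤ] Pi.single q.1.2 1) := by
  rw [← Int.cast_one (R := ZMod (n q.1.2)), wedgeOfPiSingle, ZMod.lift_coe]
  simp

variable [Fintype ι]

def wedgeOfPi : (∀ q : LtPair ι, ZMod (n q.1.2)) →+ ExteriorSquare (∀ i, ZMod (n i)) :=
  ∑ q, (wedgeOfPiSingle q).comp (Pi.evalAddMonoidHom _ q)

theorem wedgeOfPi_single (q : LtPair ι) (x : ZMod (n q.1.2)) :
    wedgeOfPi (Pi.single q x) = wedgeOfPiSingle q x := by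
  rw [wedgeOfPi, AddMonoidHom.finsetSum_apply, Fintype.sum_eq_single q fun q' hq' => by
    simp [Pi.single_eq_of_ne hq']]
  simp

variable (n)

def exteriorSquarePiZModEquiv :
    ExteriorSquare (∀ i, ZMod (n i)) ≃+ ∀ q : LtPair ι, ZMod (n q.1.2) :=
  AddMonoidHom.toAddEquiv (wedgeToPi n hn) wedgeOfPi
    (ExteriorSquare.hom_ext_pi_zmod fun i j => by
      rcases lt_trichotomy i j with hij | rfl | hji
      · simp [wedgeToPi_mk_single n hn hij, wedgeOfPi_single, wedgeOfPiSingle_one]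
      · simp
      · rw [ExteriorSquare.mk_tmul_comm]
        simp [wedgeToPi_mk_single n hn hji, wedgeOfPi_single, wedgeOfPiSingle_one])
    (AddMonoidHom.functions_ext' _ _ _ fun q => ZMod.addMonoidHom_ext <| by
      obtain ⟨⟨i, j⟩, hij⟩ := q
      simp [wedgeOfPi_single, wedgeOfPiSingle_one, wedgeToPi_mk_single n hn hij])

include hn in
theorem card_exteriorSquare_pi_zmod :
    Nat.card (ExteriorSquare (∀ i, ZMod (n i))) = ∏ q : LtPair ι, n q.1.2 := by
  rw [Nat.card_congr (exteriorSquarePiZModEquiv n hn).toEquiv, Nat.card_pi]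
  simp only [Nat.card_zmod]

end PiZMod

theorem sum_ltPair_snd {ι M : Type*} [Fintype ι] [LinearOrder ι] [LocallyFiniteOrderBot ι]
    [AddCommMonoid M] (f : ι → M) :
    ∑ q : LtPair ι, f q.1.2 = ∑ j, #(Iio j) • f j := by
  rw [← Finset.sum_subtype (univ.filter fun q : ι × ι => q.1 < q.2) (by simp) (fun q => f q.2),
    Finset.sum_filter, Fintype.sum_prod_type, Finset.sum_comm]
  refine Fintype.sum_congr _ _ fun j => ?_
  dsimp only
  rw [← Finset.sum_filter, Finset.sum_const, filter_gt_eq_Iio]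

theorem Fin.mem_iff_lt_card_of_isLowerSet {m : ℕ} {S : Finset (Fin m)}
    (hS : IsLowerSet (S : Set (Fin m))) (j : Fin m) : j ∈ S ↔ (j : ℕ) < #S := by
  constructor
  · intro hj
    have := card_le_card fun i hi => hS (mem_Iic.mp hi) hj
    rw [Fin.card_Iic] at this
    omega
  · intro h
    by_contra hj
    have := card_le_card fun i hi => mem_Iio.mpr (lt_of_not_ge fun hji => hj (hS hji hi))
    rw [Fin.card_Iio] at this
    omega

theorem Fin.sum_val_of_isLowerSet {m : ℕ} {S : Finset (Fin m)}
    (hS : IsLowerSet (S : Set (Fin m))) : ∑ j ∈ S, (j : ℕ) = #S * (#S - 1) / 2 := by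
  have hS' : S.map Fin.valEmbedding = range #S := by
    ext t
    simp only [mem_map, Fin.valEmbedding_apply, mem_range]
    constructor
    · rintro ⟨j, hj, rfl⟩
      exact (Fin.mem_iff_lt_card_of_isLowerSet hS j).mp hj
    · intro ht
      have htm : t < m := ht.trans_le (card_le_univ S |>.trans_eq (Fintype.card_fin m))
      exact ⟨⟨t, htm⟩, (Fin.mem_iff_lt_card_of_isLowerSet hS _).mpr ht, rfl⟩
  rw [← sum_range_id, ← hS', sum_map]
  rfl

theorem sum_ltPair_eq_sum_card_choose_two {m s : ℕ} {l : Fin m → ℕ} (hl : Antitone l)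
    (hls : ∀ i, l i ≤ s) :
    ∑ q : LtPair (Fin m), l q.1.2 =
      ∑ k ∈ Icc 1 s, #{j | k ≤ l j} * (#{j | k ≤ l j} - 1) / 2 := by
  have hl' (j : Fin m) : l j = #{k ∈ Icc 1 s | k ≤ l j} := by
    have hfilter : {k ∈ Icc 1 s | k ≤ l j} = Icc 1 (l j) := by
      ext k
      simp only [mem_filter, mem_Icc]
      have := hls j
      omega
    rw [hfilter, Nat.card_Icc, Nat.add_sub_cancel]
  have hlower (k : ℕ) : IsLowerSet (({j | k ≤ l j} : Finset (Fin m)) : Set (Fin m)) := by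
    intro a b hba ha
    simp only [coe_filter, mem_univ, true_and, Set.mem_ofPred_eq] at ha ⊢
    exact ha.trans (hl hba)
  calc ∑ q : LtPair (Fin m), l q.1.2
      = ∑ j : Fin m, ∑ k ∈ Icc 1 s, if k ≤ l j then (j : ℕ) else 0 := by
        rw [sum_ltPair_snd]
        refine Fintype.sum_congr _ _ fun j => ?_
        rw [Fin.card_Iio, ← sum_filter, sum_const, smul_eq_mul, smul_eq_mul, ← hl' j, mul_comm]
    _ = ∑ k ∈ Icc 1 s, ∑ j ∈ {j | k ≤ l j}, (j : ℕ) := by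
        rw [sum_comm]
        simp only [sum_filter]
    _ = _ := sum_congr rfl fun k _ => Fin.sum_val_of_isLowerSet (hlower k)

open TensorProduct in
theorem card_exterior_square_abelian_p_group_general (p : ℕ) (s m : ℕ)
    (l : Fin m → ℕ) (hanti : ∀ i j : Fin m, i ≤ j → l j ≤ l i) (hls : ∀ i, l i ≤ s)
    (conj : ℕ → ℕ) (hconj : ∀ i, conj i = Nat.card {j : Fin m // i ≤ l j}) :
    Nat.card
        ((TensorProduct ℤ (∀ i, ZMod (p ^ l i)) (∀ i, ZMod (p ^ l i))) ⧸
          AddSubgroup.closure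
            {z : TensorProduct ℤ (∀ i, ZMod (p ^ l i)) (∀ i, ZMod (p ^ l i)) |
              ∃ g : ∀ i, ZMod (p ^ l i), z = g ⊗ₜ[ℤ] g}) =
      p ^ (∑ i ∈ Finset.Icc 1 s, conj i * (conj i - 1) / 2) := by
  have hdvd (i j : Fin m) (hij : i < j) : p ^ l j ∣ p ^ l i := pow_dvd_pow p (hanti i j hij.le)
  rw [card_exteriorSquare_pi_zmod _ hdvd, prod_pow_eq_pow_sum,
    sum_ltPair_eq_sum_card_choose_two hanti hls]
  simp only [hconj, Nat.card_eq_fintype_card, Fintype.card_subtype]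

open TensorProduct in
/-- Let `p` be prime, `λ` a partition with parts `λ₁ ≥ … ≥ λ_m` (all parts at most `s`),
and `G_λ = ⊕ᵢ ℤ/p^{λᵢ}ℤ`. The exterior square `∧²G_λ`, i.e. the quotient of
`G_λ ⊗_ℤ G_λ` by the subgroup generated by all `g ⊗ g`, has cardinality
`p^{Σ_{i≥1} λ'ᵢ(λ'ᵢ−1)/2}` where `λ'` is the conjugate partition. -/
theorem card_exterior_square_abelian_p_group (p : ℕ) (hp : p.Prime) (s m : ℕ)
    (l : Fin m → ℕ) (hanti : ∀ i j : Fin m, i ≤ j → l j ≤ l i) (hls : ∀ i, l i ≤ s)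
    (conj : ℕ → ℕ) (hconj : ∀ i, conj i = Nat.card {j : Fin m // i ≤ l j}) :
    Nat.card
        ((TensorProduct ℤ (∀ i, ZMod (p ^ l i)) (∀ i, ZMod (p ^ l i))) ⧸
          AddSubgroup.closure
            {z : TensorProduct ℤ (∀ i, ZMod (p ^ l i)) (∀ i, ZMod (p ^ l i)) |
              ∃ g : ∀ i, ZMod (p ^ l i), z = g ⊗ₜ[ℤ] g}) =
      p ^ (∑ i ∈ Finset.Icc 1 s, conj i * (conj i - 1) / 2) :=
  card_exterior_square_abelian_p_group_general p s m l hanti hls conj hconj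
end
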